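/- Every subgroup of a CSA group is CSA. -/

import Mathlib

universe u

/-- A group is *CSA* if every maximal abelian subgroup `A` is malnormal:
for every `g ∉ A`, `A ⊓ gAg⁻¹ = ⊥`. -/
def IsCSA (G : Type u) [Group G] : Prop :=
  ∀ A : Subgroup G, Maximal (fun B : Subgroup G => IsMulCommutative B) A →
    ∀ g : G, g ∉ A → A ⊓ Subgroup.map (MulAut.conj g).toMonoidHom A = ⊥

/-!
A maximal abelian subgroup `A` of `H ≤ G` lies in a maximal abelian subgroup `B` of `G`, and
maximality of `A` forces `B ∩ H = A`. Hence `g ∈ H \ A` lies outside `B`, and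
`A ∩ gAg⁻¹ ⊆ B ∩ gBg⁻¹ = 1`.
-/

namespace Subgroup

variable {G H : Type*} [Group G] [Group H]

theorem exists_le_maximal_isMulCommutative (A : Subgroup G) [IsMulCommutative A] :
    ∃ B, A ≤ B ∧ Maximal (fun B : Subgroup G => IsMulCommutative B) B := by
  refine zorn_le_nonempty₀ _ (fun c hc hchain B hB => ?_) A ‹_›
  have : Nonempty c := ⟨⟨B, hB⟩⟩
  have (S : c) : IsMulCommutative (S : Subgroup G) := hc S.2
  refine ⟨sSup c, ?_, fun S hS => le_sSup hS⟩
  rw [sSup_eq_iSup']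
  exact isMulCommutative_iSup hchain.directedOn.directed_val

theorem comap_eq_of_maximal_isMulCommutative {f : H →* G} (hf : Function.Injective f)
    {A : Subgroup H} (hA : Maximal (fun B : Subgroup H => IsMulCommutative B) A)
    {B : Subgroup G} [IsMulCommutative B] (hAB : A.map f ≤ B) : B.comap f = A :=
  have hAB' := map_le_iff_le_comap.1 hAB
  le_antisymm (hA.2 (B.comap_injective_isMulCommutative hf) hAB') hAB'

theorem map_map_conj (f : H →* G) (A : Subgroup H) (g : H) :
    (A.map (MulAut.conj g).toMonoidHom).map f = (A.map f).map (MulAut.conj (f g)).toMonoidHom := by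
  rw [map_map, map_map]
  congr 1
  ext
  simp

end Subgroup

open Subgroup in
theorem IsCSA.of_injective {G H : Type u} [Group G] [Group H] (hG : IsCSA G) {f : H →* G}
    (hf : Function.Injective f) : IsCSA H := by
  intro A hA g hg
  have := hA.prop
  obtain ⟨B, hAB, hB⟩ := (A.map f).exists_le_maximal_isMulCommutative
  have := hB.prop
  have hgB : f g ∉ B := by
    rwa [← mem_comap, comap_eq_of_maximal_isMulCommutative hf hA hAB]
  rw [← (map_injective hf).eq_iff, Subgroup.map_bot, eq_bot_iff, ← hG B hB (f g) hgB]
  refine map_inf_le _ _ _ |>.trans (inf_le_inf hAB ?_)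
  rw [map_map_conj]
  exact map_mono hAB

/-- Every subgroup of a CSA group is CSA. -/
theorem stmt_5 (G : Type u) [Group G] (hcsa : IsCSA G) (H : Subgroup G) :
    IsCSA H :=
  hcsa.of_injective H.subtype_injective
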